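/- Let A_i = diag(A_i^{(11)},…,A_i^{(tt)}) with A_i^{(jj)} ∈ ℝ^{n_j×n_j} for 1 ≤ i ≤ m, let 𝒜_j = {A_i^{(jj)}}_{i=1}^m, and suppose dim 𝒩(𝒜_ℓ) = 1 for all 1 ≤ ℓ ≤ t, so that the modulus of non-divisibility ω_rob is well-defined. Let Z ∈ ℝ^{n×n} with blocks Z_{jk} ∈ ℝ^{n_j×n_k}, set R_i = A_i Z − Zᵀ A_i, and let μ_{j1},…,μ_{j n_j} be the eigenvalues of Z_{jj} (roots in ℂ of its characteristic polynomial, with multiplicity). Then for each j there exists a real number μ̂_j such that Σ_{k=1}^{n_j} |μ_{jk} − μ̂_j|² ≤ (Σ_{i=1}^m ‖Bdiag_{τ_n}(R_i)‖_F²)/ω_rob². -/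

import Mathlib

open Matrix BigOperators Kronecker
open scoped ENNReal

namespace JBD

/-- Index type for `τ_n`-block partitioned `n×n` matrices, where the partition
`τ_n = (n 0, …, n (t-1))`. -/
abbrev BlkIdx {t : ℕ} (n : Fin t → ℕ) := Σ j : Fin t, Fin (n j)

variable {t : ℕ} {n : Fin t → ℕ}

/-- The `τ_n`-block diagonal part `Bdiag_{τ_n}(A)`. -/
def bdiag (A : Matrix (BlkIdx n) (BlkIdx n) ℝ) : Matrix (BlkIdx n) (BlkIdx n) ℝ :=
  fun p q => if p.1 = q.1 then A p q else 0

/-- The `τ_n`-off-block diagonal part `OffBdiag_{τ_n}(A)`. -/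
def offBdiag (A : Matrix (BlkIdx n) (BlkIdx n) ℝ) : Matrix (BlkIdx n) (BlkIdx n) ℝ :=
  A - bdiag A

/-- `A ∈ 𝔻_{τ_n}`, i.e. `A` is `τ_n`-block diagonal. -/
def IsBlockDiag (A : Matrix (BlkIdx n) (BlkIdx n) ℝ) : Prop :=
  ∀ p q : BlkIdx n, p.1 ≠ q.1 → A p q = 0

/-- `P` is a permutation matrix. -/
def IsPermMatrix {I : Type*} [DecidableEq I] [Fintype I] (P : Matrix I I ℝ) : Prop :=
  ∃ σ : Equiv.Perm I, P = σ.permMatrix ℝ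

/-- `P ∈ ℙ_{τ_n}`: a `τ_n`-block diagonal preserving permutation matrix. -/
def IsBDPerm (P : Matrix (BlkIdx n) (BlkIdx n) ℝ) : Prop :=
  IsPermMatrix P ∧
    ∀ D : Matrix (BlkIdx n) (BlkIdx n) ℝ, IsBlockDiag D → IsBlockDiag (Pᵀ * D * P)

/-- `W ∈ 𝕎_{τ_n}`: nonsingular with `Bdiag_{τ_n}(Wᵀ W) = I`. -/
def MemW (W : Matrix (BlkIdx n) (BlkIdx n) ℝ) : Prop :=
  IsUnit W ∧ bdiag (Wᵀ * W) = 1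

/-- `W` is a `τ_n`-block diagonalizer of the matrix set `𝒜 = {A i}`. -/
def IsDiagonalizer {m : ℕ} (A : Fin m → Matrix (BlkIdx n) (BlkIdx n) ℝ)
    (W : Matrix (BlkIdx n) (BlkIdx n) ℝ) : Prop :=
  IsUnit W ∧ ∀ i, IsBlockDiag (Wᵀ * A i * W)

/-- The JBDP for `𝒜` is uniquely `τ_n`-block diagonalizable. -/
def UniquelyBD {m : ℕ} (A : Fin m → Matrix (BlkIdx n) (BlkIdx n) ℝ) : Prop :=
  (∃ W, IsDiagonalizer A W) ∧
    ∀ W W', IsDiagonalizer A W → IsDiagonalizer A W' →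
      ∃ D P : Matrix (BlkIdx n) (BlkIdx n) ℝ,
        IsBlockDiag D ∧ IsUnit D ∧ IsBDPerm P ∧ W' = W * D * P

/-- The `j`-th diagonal block of a `τ_n`-partitioned matrix. -/
def dblock (A : Matrix (BlkIdx n) (BlkIdx n) ℝ) (j : Fin t) :
    Matrix (Fin (n j)) (Fin (n j)) ℝ := fun x y => A ⟨j, x⟩ ⟨j, y⟩

/-- A family `B = {B i}` of `N×N` matrices can be (further) simultaneously block
diagonalized by congruence, with respect to some partition of `N` of cardinality `≥ 2`. -/
def CanSplit {N m : ℕ} (B : Fin m → Matrix (Fin N) (Fin N) ℝ) : Prop :=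
  ∃ (s : ℕ) (k : Fin s → ℕ), 2 ≤ s ∧ (∀ j, 0 < k j) ∧ (∑ j, k j) = N ∧
    ∃ (e : Fin N ≃ BlkIdx k) (V : Matrix (Fin N) (Fin N) ℝ), IsUnit V ∧
      ∀ i, IsBlockDiag (Matrix.reindex e e (Vᵀ * B i * V))

/-- The subspace `𝒩(ℬ) = {Z : B i * Z - Zᵀ * B i = 0 for all i}`. -/
def nSubmodule {m : ℕ} {I : Type*} [Fintype I] (B : Fin m → Matrix I I ℝ) :
    Submodule ℝ (Matrix I I ℝ) where
  carrier := {Z | ∀ i, B i * Z - Zᵀ * B i = 0}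
  add_mem' := by
    intro a b ha hb i
    have h1 := ha i
    have h2 := hb i
    have : (B i * a - aᵀ * B i) + (B i * b - bᵀ * B i) = 0 := by rw [h1, h2, add_zero]
    calc B i * (a + b) - (a + b)ᵀ * B i
        = (B i * a - aᵀ * B i) + (B i * b - bᵀ * B i) := by
          rw [Matrix.mul_add, Matrix.transpose_add, Matrix.add_mul]; abel
      _ = 0 := this
  zero_mem' := by intro i; simp
  smul_mem' := by
    intro c Z hZ i
    have h := hZ i
    calc B i * (c • Z) - (c • Z)ᵀ * B i = c • (B i * Z - Zᵀ * B i) := by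
          rw [Matrix.mul_smul, Matrix.transpose_smul, Matrix.smul_mul, smul_sub]
      _ = 0 := by rw [h, smul_zero]

/-- Frobenius norm. -/
noncomputable def frob {I J : Type*} [Fintype I] [Fintype J] (A : Matrix I J ℝ) : ℝ :=
  Real.sqrt (∑ i, ∑ j, (A i j) ^ 2)

/-- Spectral norm (operator 2-norm). -/
noncomputable def spec {I : Type*} [Fintype I] [DecidableEq I] (A : Matrix I I ℝ) : ℝ :=
  ‖Matrix.toEuclideanCLM (𝕜 := ℝ) A‖

/-- Singular values of a real matrix: square roots of the eigenvalues of `Aᵀ * A`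
(one for each column index). -/
noncomputable def sv {I J : Type*} [Fintype I] [Fintype J] [DecidableEq J]
    (A : Matrix I J ℝ) (k : J) : ℝ :=
  Real.sqrt ((Matrix.isHermitian_conjTranspose_mul_self A).eigenvalues k)

/-- The smallest singular value. -/
noncomputable def sigmaMin {I J : Type*} [Fintype I] [Fintype J] [DecidableEq J]
    (A : Matrix I J ℝ) : ℝ :=
  ⨅ k : J, sv A k

/-- The smallest nonzero singular value. -/
noncomputable def minNonzeroSV {I J : Type*} [Fintype I] [Fintype J] [DecidableEq J]
    (A : Matrix I J ℝ) : ℝ :=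
  sInf {s | (∃ k, sv A k = s) ∧ s ≠ 0}

/-- The list of singular values sorted in increasing order. -/
noncomputable def svSorted {I J : Type*} [Fintype I] [Fintype J] [DecidableEq J]
    (A : Matrix I J ℝ) : List ℝ :=
  (Finset.univ.val.map (sv A)).sort (· ≤ ·)

/-- The second smallest singular value. -/
noncomputable def secondSmallestSV {I J : Type*} [Fintype I] [Fintype J] [DecidableEq J]
    (A : Matrix I J ℝ) : ℝ :=
  (svSorted A).getD 1 0

/-- The matrix `G_{jk}` (for `j < k`), built from the diagonal blocks
`Aj i = A_i^{(jj)}` (size `a`) and `Ak i = A_i^{(kk)}` (size `b`). -/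
noncomputable def Gjk {m a b : ℕ} (Aj : Fin m → Matrix (Fin a) (Fin a) ℝ)
    (Ak : Fin m → Matrix (Fin b) (Fin b) ℝ) :
    Matrix (Fin m × ((Fin b × Fin a) ⊕ (Fin b × Fin a))) ((Fin b × Fin a) ⊕ (Fin b × Fin a)) ℝ :=
  fun r c =>
    Matrix.fromBlocks
      ((1 : Matrix (Fin b) (Fin b) ℝ) ⊗ₖ Aj r.1) ((Ak r.1)ᵀ ⊗ₖ (1 : Matrix (Fin a) (Fin a) ℝ))
      ((1 : Matrix (Fin b) (Fin b) ℝ) ⊗ₖ (Aj r.1)ᵀ) (Ak r.1 ⊗ₖ (1 : Matrix (Fin a) (Fin a) ℝ))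
      r.2 c

/-- Column-major vectorization: `vecM Z (c, r) = Z r c`. -/
def vecM {a b : ℕ} (Z : Matrix (Fin a) (Fin b) ℝ) : Fin b × Fin a → ℝ :=
  fun p => Z p.2 p.1

/-- The perfect-shuffle permutation matrix `Π_j`, satisfying
`shuffle a *ᵥ vecM Zᵀ = vecM Z`. -/
def shuffle (a : ℕ) : Matrix (Fin a × Fin a) (Fin a × Fin a) ℝ :=
  fun p q => if q = p.swap then 1 else 0

/-- The matrix `G_{jj}`, built from the diagonal blocks `Aj i = A_i^{(jj)}` (size `a`):
its `i`-th block row is `I ⊗ Aj i - ((Aj i)ᵀ ⊗ I) * Π_j`. -/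
noncomputable def Gjj {m a : ℕ} (Aj : Fin m → Matrix (Fin a) (Fin a) ℝ) :
    Matrix (Fin m × (Fin a × Fin a)) (Fin a × Fin a) ℝ :=
  fun r c =>
    ((1 : Matrix (Fin a) (Fin a) ℝ) ⊗ₖ Aj r.1
      - ((Aj r.1)ᵀ ⊗ₖ (1 : Matrix (Fin a) (Fin a) ℝ)) * shuffle a) r.2 c

/-- The matrix `M_{jk}` from Theorem 2.1, `M_{jk} = G_{jk}ᵀ G_{jk}`. -/
noncomputable def Mjk {m a b : ℕ} (Aj : Fin m → Matrix (Fin a) (Fin a) ℝ)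
    (Ak : Fin m → Matrix (Fin b) (Fin b) ℝ) :
    Matrix ((Fin b × Fin a) ⊕ (Fin b × Fin a)) ((Fin b × Fin a) ⊕ (Fin b × Fin a)) ℝ :=
  ∑ i, Matrix.fromBlocks
    ((1 : Matrix (Fin b) (Fin b) ℝ) ⊗ₖ ((Aj i)ᵀ * Aj i + Aj i * (Aj i)ᵀ))
    (Ak i ⊗ₖ Aj i + (Ak i)ᵀ ⊗ₖ (Aj i)ᵀ)
    (Ak i ⊗ₖ Aj i + (Ak i)ᵀ ⊗ₖ (Aj i)ᵀ)
    (((Ak i)ᵀ * Ak i + Ak i * (Ak i)ᵀ) ⊗ₖ (1 : Matrix (Fin a) (Fin a) ℝ))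

/-- The modulus of uniqueness `ω_uniq = min_{j<k} σ_min(G_{jk})`, in terms of the
family of diagonal blocks `Ab j i = A_i^{(jj)}`. -/
noncomputable def omegaUniq {m : ℕ}
    (Ab : ∀ j : Fin t, Fin m → Matrix (Fin (n j)) (Fin (n j)) ℝ) : ℝ :=
  ⨅ p : {p : Fin t × Fin t // p.1 < p.2}, sigmaMin (Gjk (Ab p.1.1) (Ab p.1.2))

/-- The modulus of non-divisibility `ω_rob` (`+∞` when `τ_n = (1,…,1)`), in terms of
the family of diagonal blocks `Ab j i = A_i^{(jj)}`. -/
noncomputable def omegaRob {m : ℕ}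
    (Ab : ∀ j : Fin t, Fin m → Matrix (Fin (n j)) (Fin (n j)) ℝ) : ℝ≥0∞ :=
  ⨅ (j : Fin t) (_ : 1 < n j), ENNReal.ofReal (minNonzeroSV (Gjj (Ab j)))

/-- The matrix `Γ = diag(γ_1 I_{n_1}, …, γ_t I_{n_t})`. -/
def gmat (γ : Fin t → ℝ) : Matrix (BlkIdx n) (BlkIdx n) ℝ :=
  Matrix.diagonal (fun p => γ p.1)

/-- The gap `g = min_{j ≠ k} |γ_j - γ_k|`. -/
noncomputable def gammaGap (γ : Fin t → ℝ) : ℝ :=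
  ⨅ p : {p : Fin t × Fin t // p.1 ≠ p.2}, |γ p.1.1 - γ p.1.2|

/-- The multiset of complex eigenvalues (with algebraic multiplicity) of a real
square matrix: the roots of its characteristic polynomial over `ℂ`. -/
noncomputable def eigMultiset {I : Type*} [Fintype I] [DecidableEq I]
    (Z : Matrix I I ℝ) : Multiset ℂ :=
  (Z.map (Complex.ofReal)).charpoly.roots

/-- The `j`-th block column of `P`, with its `j`-th (diagonal) block replaced by `0`:
the matrix `P̂_j`. -/
def hatColumn (P : Matrix (BlkIdx n) (BlkIdx n) ℝ) (j : Fin t) :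
    Matrix (BlkIdx n) (Fin (n j)) ℝ :=
  fun p y => if p.1 = j then 0 else P p ⟨j, y⟩

end JBD

/-!
Put `E = Z_jj - μ̂ I` with `μ̂ = tr Z_jj / n_j`, so that `tr E = 0`. Schur's inequality bounds
`∑ |μ_jk - μ̂|²` by `‖E‖_F²`. Since `A_i^{(jj)} E - Eᵀ A_i^{(jj)}` is the `j`-th diagonal block of
`R_i`, the vector `G_jj vec E` collects these blocks and has norm at most
`(∑ ‖Bdiag R_i‖_F²)^{1/2}`. As `dim 𝒩(𝒜_j) = 1`, the kernel of `G_jj` is spanned by `vec I`,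
which is orthogonal to `vec E` because `tr E = 0`; so `‖G_jj vec E‖ ≥ σ ‖vec E‖` for the smallest
nonzero singular value `σ` of `G_jj`. Blocks of size one are excluded from `ω_rob`, but there
`tr E = 0` already forces `E = 0`.
-/

namespace Matrix

open Polynomial

section Schur

variable {ι : Type*} [Fintype ι]

theorem sum_norm_sq_eq_re_trace (W : Matrix ι ι ℂ) :
    ∑ i, ∑ j, ‖W i j‖ ^ 2 = (Wᴴ * W).trace.re := by
  simp only [trace, diag, mul_apply, conjTranspose_apply, Complex.re_sum, Complex.sq_norm,
    Complex.normSq_apply, RCLike.star_def, Complex.mul_re, Complex.conj_re, Complex.conj_im]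
  rw [Finset.sum_comm]
  exact Finset.sum_congr rfl fun _ _ => Finset.sum_congr rfl fun _ _ => by ring

variable [DecidableEq ι] {U : Matrix ι ι ℂ}

theorem sum_norm_sq_unitary_conj (hU : U ∈ unitaryGroup ι ℂ) (W : Matrix ι ι ℂ) :
    ∑ i, ∑ j, ‖(star U * W * U) i j‖ ^ 2 = ∑ i, ∑ j, ‖W i j‖ ^ 2 := by
  have hUU : U * Uᴴ = 1 := Unitary.mul_star_self_of_mem hU
  have hgram : (star U * W * U)ᴴ * (star U * W * U) = Uᴴ * (Wᴴ * W) * U := by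
    simp only [conjTranspose_mul, star_eq_conjTranspose, conjTranspose_conjTranspose,
      Matrix.mul_assoc]
    rw [← Matrix.mul_assoc U, hUU, Matrix.one_mul]
  rw [sum_norm_sq_eq_re_trace, sum_norm_sq_eq_re_trace, hgram, trace_mul_cycle, hUU,
    Matrix.one_mul]

theorem charpoly_unitary_conj (hU : U ∈ unitaryGroup ι ℂ) (W : Matrix ι ι ℂ) :
    (star U * W * U).charpoly = W.charpoly := by
  rw [charpoly_mul_comm, ← Matrix.mul_assoc, Unitary.mul_star_self_of_mem hU, Matrix.one_mul]

theorem charpoly_eq_X_sub_C_mul_of_col_zero {R : Type*} [CommRing R] {s : ℕ}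
    (M : Matrix (Fin (s + 1)) (Fin (s + 1)) R) (μ : R)
    (hM : ∀ i, M i 0 = if i = 0 then μ else 0) :
    M.charpoly = (X - C μ) * (M.submatrix Fin.succ Fin.succ).charpoly := by
  rw [charpoly, det_succ_column_zero, Fin.sum_univ_succ, Finset.sum_eq_zero]
  · have hsub : (charmatrix M).submatrix Fin.succ Fin.succ
        = charmatrix (M.submatrix Fin.succ Fin.succ) := by
      ext i j
      by_cases h : i = j <;> simp [h]
    simp [charmatrix_apply_eq, hM, hsub, charpoly]
  · intro i _
    rw [charmatrix_apply_ne _ _ _ (Fin.succ_ne_zero i), hM, if_neg (Fin.succ_ne_zero i)]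
    simp

theorem exists_unitary_conj_col_zero {s : ℕ} (W : Matrix (Fin (s + 1)) (Fin (s + 1)) ℂ) :
    ∃ μ : ℂ, ∃ U ∈ unitaryGroup (Fin (s + 1)) ℂ,
      ∀ i, (star U * W * U) i 0 = if i = 0 then μ else 0 := by
  obtain ⟨μ, hμ⟩ := Module.End.exists_eigenvalue (toEuclideanLin W)
  obtain ⟨v, hv⟩ := hμ.exists_hasEigenvector
  have hu : Orthonormal ℂ (({0} : Set (Fin (s + 1))).domRestrict fun _ => (‖v‖⁻¹ : ℂ) • v) :=
    ⟨fun _ => norm_smul_inv_norm hv.2, fun i j hij => absurd (Subsingleton.elim i j) hij⟩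
  obtain ⟨b, hb⟩ := hu.exists_orthonormalBasis_extension_of_card_eq (by simp)
  set U := (EuclideanSpace.basisFun _ ℂ).toBasis.toMatrix b
  have hU : U ∈ unitaryGroup (Fin (s + 1)) ℂ :=
    (EuclideanSpace.basisFun _ ℂ).toMatrix_orthonormalBasis_mem_unitary b
  have hUcol : ∀ j, U *ᵥ Pi.single j 1 = b j := fun j => by
    ext k; simp [U, Module.Basis.toMatrix_apply]
  have hWb : W *ᵥ b 0 = μ • b 0 := by
    have hWv : W *ᵥ v = μ • v := congrArg WithLp.ofLp (Module.End.mem_eigenspace_iff.mp hv.1)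
    rw [hb 0 rfl, WithLp.ofLp_smul, mulVec_smul, hWv, smul_comm]
  refine ⟨μ, U, hU, fun i => ?_⟩
  have hcol : (star U * W * U) *ᵥ Pi.single 0 1 = Pi.single 0 μ := by
    rw [← mulVec_mulVec, hUcol, ← mulVec_mulVec, hWb, mulVec_smul, ← hUcol, mulVec_mulVec,
      Unitary.star_mul_self_of_mem hU, one_mulVec]
    ext k; simp [Pi.single_apply]
  simpa [Pi.single_apply, mulVec_single_one] using congrFun hcol i

/-- Schur's inequality. -/
theorem sum_norm_sq_roots_charpoly_le (W : Matrix ι ι ℂ) :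
    (W.charpoly.roots.map fun μ => ‖μ‖ ^ 2).sum ≤ ∑ i, ∑ j, ‖W i j‖ ^ 2 := by
  suffices h : ∀ (s : ℕ) (W : Matrix (Fin s) (Fin s) ℂ),
      (W.charpoly.roots.map fun μ => ‖μ‖ ^ 2).sum ≤ ∑ i, ∑ j, ‖W i j‖ ^ 2 by
    let e := Fintype.equivFin ι
    have hW := h _ (reindex e e W)
    rw [charpoly_reindex] at hW
    refine hW.trans_eq (Fintype.sum_equiv e.symm _ _ fun i => Fintype.sum_equiv e.symm _ _ ?_)
    simp
  intro s
  induction s with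
  | zero => intro W; simp [charpoly, det_isEmpty]
  | succ s ih =>
    intro W
    obtain ⟨μ, U, hU, hcol⟩ := exists_unitary_conj_col_zero W
    set M := star U * W * U
    have hroots : W.charpoly.roots = μ ::ₘ (M.submatrix Fin.succ Fin.succ).charpoly.roots := by
      rw [← charpoly_unitary_conj hU, charpoly_eq_X_sub_C_mul_of_col_zero M μ hcol,
        roots_mul (mul_ne_zero (X_sub_C_ne_zero μ) (charpoly_monic _).ne_zero), roots_X_sub_C,
        Multiset.singleton_add]
    rw [hroots, Multiset.map_cons, Multiset.sum_cons, ← sum_norm_sq_unitary_conj hU W,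
      Fin.sum_univ_succ]
    gcongr ?_ + ?_
    · have hM00 : M 0 0 = μ := by simpa using hcol 0
      rw [← hM00]
      exact Finset.single_le_sum (f := fun j => ‖M 0 j‖ ^ 2) (fun _ _ => by positivity)
        (Finset.mem_univ 0)
    · refine (ih _).trans (Finset.sum_le_sum fun i _ => ?_)
      rw [Fin.sum_univ_succ (f := fun j => ‖M i.succ j‖ ^ 2)]
      exact le_add_of_nonneg_left (by positivity)

theorem roots_charpoly_sub_scalar {R : Type*} [CommRing R] [IsDomain R] (M : Matrix ι ι R)
    (c : R) : (M - scalar ι c).charpoly.roots = M.charpoly.roots.map (· - c) := by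
  rw [charpoly_sub_scalar, show (X + C c : R[X]) = C 1 * X + C c by simp,
    roots_comp_C_mul_X_add_C _ _ _ isUnit_one]
  simp

end Schur

section Trace

variable {ι : Type*} [Fintype ι]

theorem eq_zero_of_trace_eq_zero {R : Type*} [AddCommMonoid R] [Subsingleton ι]
    {X : Matrix ι ι R} (hX : X.trace = 0) : X = 0 := by
  ext i j
  rw [Subsingleton.elim j i, Matrix.zero_apply, ← hX, trace, Fintype.sum_subsingleton _ i]
  rfl

variable [DecidableEq ι]

theorem trace_sub_trace_div_card_smul_one {K : Type*} [Field K] [CharZero K]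
    (X : Matrix ι ι K) : (X - (X.trace / Fintype.card ι) • 1).trace = 0 := by
  rcases isEmpty_or_nonempty ι with hι | hι
  · exact trace_eq_zero_of_isEmpty _
  · rw [trace_sub, trace_smul, trace_one, smul_eq_mul, div_mul_cancel₀ _ (by simp), sub_self]

theorem mul_sub_smul_one_sub_transpose_mul {R : Type*} [CommRing R] (B X : Matrix ι ι R)
    (c : R) : B * (X - c • 1) - (X - c • 1)ᵀ * B = B * X - Xᵀ * B := by
  rw [transpose_sub, transpose_smul, transpose_one, Matrix.mul_sub, Matrix.sub_mul,
    Matrix.mul_smul, Matrix.smul_mul, Matrix.mul_one, Matrix.one_mul]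
  abel

end Trace

section Gram

variable {K J : Type*} [Fintype K] [Fintype J]

theorem dotProduct_self_eq_sum_sq (b : OrthonormalBasis J ℝ (EuclideanSpace ℝ J))
    (x : J → ℝ) : x ⬝ᵥ x = ∑ k, (⇑(b k) ⬝ᵥ x) ^ 2 := by
  have h := b.sum_inner_mul_inner (WithLp.toLp 2 x) (WithLp.toLp 2 x)
  simp only [EuclideanSpace.inner_eq_star_dotProduct, star_trivial] at h
  rw [← h]
  exact Finset.sum_congr rfl fun k _ => by rw [dotProduct_comm x]; ring

theorem mulVec_dotProduct_mulVec_self (G : Matrix K J ℝ) (x : J → ℝ) :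
    (G *ᵥ x) ⬝ᵥ (G *ᵥ x) = x ⬝ᵥ (Gᴴ * G) *ᵥ x := by
  rw [← mulVec_mulVec, conjTranspose_eq_transpose_of_trivial, mulVec_transpose,
    dotProduct_mulVec]
  exact dotProduct_comm _ _

variable [DecidableEq J]

theorem IsHermitian.dotProduct_mulVec_eq_sum_eigenvalues {H : Matrix J J ℝ}
    (hH : H.IsHermitian) (x : J → ℝ) :
    x ⬝ᵥ H *ᵥ x = ∑ k, hH.eigenvalues k * (⇑(hH.eigenvectorBasis k) ⬝ᵥ x) ^ 2 := by
  have h := hH.eigenvectorBasis.sum_inner_mul_inner (WithLp.toLp 2 x) (WithLp.toLp 2 (H *ᵥ x))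
  simp only [EuclideanSpace.inner_eq_star_dotProduct, star_trivial] at h
  rw [dotProduct_comm, ← h]
  refine Finset.sum_congr rfl fun k _ => ?_
  have hsymm : H *ᵥ x ⬝ᵥ ⇑(hH.eigenvectorBasis k) =
      hH.eigenvalues k * (⇑(hH.eigenvectorBasis k) ⬝ᵥ x) := by
    rw [dotProduct_comm, dotProduct_mulVec, ← mulVec_transpose,
      ← conjTranspose_eq_transpose_of_trivial, hH.eq, hH.mulVec_eigenvectorBasis,
      smul_dotProduct, smul_eq_mul]
  rw [hsymm]
  ring

end Gram

end Matrix

namespace JBD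

section SingularValues

variable {K J : Type*} [Fintype K] [Fintype J] [DecidableEq J] (G : Matrix K J ℝ)

theorem minNonzeroSV_pos_and_sq_le {k : J}
    (hk : (isHermitian_conjTranspose_mul_self G).eigenvalues k ≠ 0) :
    0 < minNonzeroSV G ∧
      minNonzeroSV G ^ 2 ≤ (isHermitian_conjTranspose_mul_self G).eigenvalues k := by
  have hpos : 0 < (isHermitian_conjTranspose_mul_self G).eigenvalues k :=
    ((posSemidef_conjTranspose_mul_self G).eigenvalues_nonneg k).lt_of_ne' hk
  have hS : {s | (∃ l, sv G l = s) ∧ s ≠ 0}.Finite :=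
    (Set.finite_range (sv G)).subset fun s hs => hs.1
  have hk_mem : sv G k ∈ {s | (∃ l, sv G l = s) ∧ s ≠ 0} :=
    ⟨⟨k, rfl⟩, (Real.sqrt_pos.mpr hpos).ne'⟩
  obtain ⟨⟨l, hl⟩, hne⟩ := Set.Nonempty.csInf_mem ⟨_, hk_mem⟩ hS
  have hσ : 0 ≤ minNonzeroSV G := by rw [minNonzeroSV, ← hl]; exact Real.sqrt_nonneg _
  refine ⟨hσ.lt_of_ne' hne, ?_⟩
  calc minNonzeroSV G ^ 2 ≤ sv G k ^ 2 := by gcongr; exact csInf_le hS.bddBelow hk_mem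
    _ = _ := Real.sq_sqrt hpos.le

variable {G} {x : J → ℝ}

theorem eigenvectorBasis_dotProduct_eq_zero (hx : ∀ v, G *ᵥ v = 0 → x ⬝ᵥ v = 0) {k : J}
    (hk : (isHermitian_conjTranspose_mul_self G).eigenvalues k = 0) :
    ⇑((isHermitian_conjTranspose_mul_self G).eigenvectorBasis k) ⬝ᵥ x = 0 := by
  rw [dotProduct_comm]
  refine hx _ ((conjTranspose_mul_self_mulVec_eq_zero G _).mp ?_)
  rw [IsHermitian.mulVec_eigenvectorBasis, hk, zero_smul]

theorem sq_minNonzeroSV_mul_dotProduct_self_le (hx : ∀ v, G *ᵥ v = 0 → x ⬝ᵥ v = 0) :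
    minNonzeroSV G ^ 2 * (x ⬝ᵥ x) ≤ (G *ᵥ x) ⬝ᵥ (G *ᵥ x) := by
  have hH := isHermitian_conjTranspose_mul_self G
  rw [dotProduct_self_eq_sum_sq hH.eigenvectorBasis, mulVec_dotProduct_mulVec_self,
    hH.dotProduct_mulVec_eq_sum_eigenvalues, Finset.mul_sum]
  refine Finset.sum_le_sum fun k _ => ?_
  by_cases hk : hH.eigenvalues k = 0
  · rw [eigenvectorBasis_dotProduct_eq_zero hx hk]
    simp
  · exact mul_le_mul_of_nonneg_right (minNonzeroSV_pos_and_sq_le G hk).2 (sq_nonneg _)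

/-- If `minNonzeroSV G = 0` then `G = 0`, so the hypothesis forces `x = 0` and the division by
`0` does no harm. -/
theorem ofReal_dotProduct_self_le_div (hx : ∀ v, G *ᵥ v = 0 → x ⬝ᵥ v = 0) :
    ENNReal.ofReal (x ⬝ᵥ x) ≤
      ENNReal.ofReal ((G *ᵥ x) ⬝ᵥ (G *ᵥ x)) / ENNReal.ofReal (minNonzeroSV G) ^ 2 := by
  by_cases hall : ∀ k, (isHermitian_conjTranspose_mul_self G).eigenvalues k = 0
  · have hx0 : x ⬝ᵥ x = 0 := by
      rw [dotProduct_self_eq_sum_sq (isHermitian_conjTranspose_mul_self G).eigenvectorBasis]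
      exact Finset.sum_eq_zero fun k _ => by
        rw [eigenvectorBasis_dotProduct_eq_zero hx (hall k), sq, zero_mul]
    simp [hx0]
  · obtain ⟨k, hk⟩ := not_forall.mp hall
    have hσ := (minNonzeroSV_pos_and_sq_le G hk).1
    rw [← ENNReal.ofReal_pow hσ.le, ← ENNReal.ofReal_div_of_pos (by positivity)]
    refine ENNReal.ofReal_le_ofReal ((le_div_iff₀ (by positivity)).mpr ?_)
    linarith [sq_minNonzeroSV_mul_dotProduct_self_le hx]

end SingularValues

section Frobenius

variable {I J : Type*} [Fintype I] [Fintype J]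

theorem frob_sq (X : Matrix I J ℝ) : frob X ^ 2 = ∑ i, ∑ j, X i j ^ 2 :=
  Real.sq_sqrt (by positivity)

theorem vec_dotProduct_vec_self (X : Matrix I J ℝ) : vec X ⬝ᵥ vec X = frob X ^ 2 := by
  rw [frob_sq, dotProduct, Fintype.sum_prod_type, Finset.sum_comm]
  simp [sq]

theorem sum_norm_sub_sq_eigMultiset_le [DecidableEq I] (Z : Matrix I I ℝ) (c : ℝ) :
    ((eigMultiset Z).map fun μ => ‖μ - (c : ℂ)‖ ^ 2).sum ≤ frob (Z - c • 1) ^ 2 := by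
  have h := sum_norm_sq_roots_charpoly_le ((Z - c • 1).map Complex.ofReal)
  simp only [map_apply, Complex.norm_real, Real.norm_eq_abs, sq_abs] at h
  have hmap : (Z - c • 1).map Complex.ofReal = Z.map Complex.ofReal - scalar I (c : ℂ) := by
    ext i j
    by_cases hij : i = j <;> simp [hij]
  rw [hmap, roots_charpoly_sub_scalar, Multiset.map_map] at h
  rwa [frob_sq]

end Frobenius

section Gjj

variable {m a : ℕ} {Aj : Fin m → Matrix (Fin a) (Fin a) ℝ}

theorem shuffle_mulVec_vec (X : Matrix (Fin a) (Fin a) ℝ) : shuffle a *ᵥ vec X = vec Xᵀ := by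
  ext p
  simp [shuffle, mulVec, dotProduct]

variable (Aj) in
theorem Gjj_mulVec_vec (X : Matrix (Fin a) (Fin a) ℝ) :
    Gjj Aj *ᵥ vec X = fun r => vec (Aj r.1 * X - Xᵀ * Aj r.1) r.2 := by
  ext ⟨i, p⟩
  change ((1 ⊗ₖ Aj i - ((Aj i)ᵀ ⊗ₖ 1) * shuffle a) *ᵥ vec X) p = _
  rw [sub_mulVec, ← mulVec_mulVec, shuffle_mulVec_vec, kronecker_mulVec_vec,
    kronecker_mulVec_vec]
  simp

variable (Aj) in
theorem Gjj_mulVec_vec_dotProduct_self (X : Matrix (Fin a) (Fin a) ℝ) :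
    (Gjj Aj *ᵥ vec X) ⬝ᵥ (Gjj Aj *ᵥ vec X) = ∑ i, frob (Aj i * X - Xᵀ * Aj i) ^ 2 := by
  simp_rw [Gjj_mulVec_vec, ← vec_dotProduct_vec_self]
  rw [dotProduct, Fintype.sum_prod_type]
  rfl

theorem mem_nSubmodule_iff_Gjj_mulVec_vec_eq_zero {X : Matrix (Fin a) (Fin a) ℝ} :
    X ∈ nSubmodule Aj ↔ Gjj Aj *ᵥ vec X = 0 := by
  rw [Gjj_mulVec_vec, funext_iff, Prod.forall]
  exact forall_congr' fun i => by rw [← vec_eq_zero_iff, funext_iff]; rfl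

theorem nSubmodule_eq_span_one {I : Type*} [Fintype I] [DecidableEq I]
    {B : Fin m → Matrix I I ℝ} (h : Module.finrank ℝ (nSubmodule B) = 1) :
    nSubmodule B = ℝ ∙ (1 : Matrix I I ℝ) := by
  have hone : (1 : Matrix I I ℝ) ≠ 0 := by
    intro h0
    have : Subsingleton (Matrix I I ℝ) := subsingleton_of_zero_eq_one h0.symm
    rw [Module.finrank_zero_of_subsingleton] at h
    exact zero_ne_one h
  refine (Submodule.eq_of_le_of_finrank_le ?_ (by rw [h, finrank_span_singleton hone])).symm
  rw [Submodule.span_singleton_le_iff_mem]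
  intro i
  simp

theorem vec_dotProduct_eq_zero_of_Gjj_mulVec_eq_zero
    (h : Module.finrank ℝ (nSubmodule Aj) = 1) {X : Matrix (Fin a) (Fin a) ℝ}
    (hX : X.trace = 0) {v : Fin a × Fin a → ℝ} (hv : Gjj Aj *ᵥ v = 0) : vec X ⬝ᵥ v = 0 := by
  obtain ⟨Y, rfl⟩ := vec_bijective.surjective v
  have hY : Y ∈ ℝ ∙ (1 : Matrix (Fin a) (Fin a) ℝ) :=
    nSubmodule_eq_span_one h ▸ mem_nSubmodule_iff_Gjj_mulVec_vec_eq_zero.mpr hv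
  obtain ⟨s, rfl⟩ := Submodule.mem_span_singleton.mp hY
  rw [vec_dotProduct_vec, Matrix.mul_smul, Matrix.mul_one, trace_smul, trace_transpose, hX,
    smul_zero]

end Gjj

section Blocks

theorem sum_le_sum_sigma {ι : Type*} [Fintype ι] {κ : ι → Type*} [∀ i, Fintype (κ i)]
    {f : (Σ i, κ i) → ℝ} (hf : ∀ p, 0 ≤ f p) (i : ι) : ∑ r, f ⟨i, r⟩ ≤ ∑ p, f p := by
  rw [Fintype.sum_sigma]
  exact Finset.single_le_sum (f := fun k => ∑ r, f ⟨k, r⟩)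
    (fun k _ => Finset.sum_nonneg fun r _ => hf _) (Finset.mem_univ i)

variable {t : ℕ} {n : Fin t → ℕ} {A : Matrix (BlkIdx n) (BlkIdx n) ℝ}

theorem dblock_mul_of_isBlockDiag_left (hA : IsBlockDiag A) (Z : Matrix (BlkIdx n) (BlkIdx n) ℝ)
    (j : Fin t) : dblock (A * Z) j = dblock A j * dblock Z j := by
  ext r c
  rw [dblock, mul_apply, Fintype.sum_sigma, Finset.sum_eq_single j]
  · rfl
  · intro k _ hk
    exact Finset.sum_eq_zero fun y _ => by rw [hA _ _ (Ne.symm hk), zero_mul]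
  · simp

theorem dblock_mul_of_isBlockDiag_right (hA : IsBlockDiag A) (Z : Matrix (BlkIdx n) (BlkIdx n) ℝ)
    (j : Fin t) : dblock (Z * A) j = dblock Z j * dblock A j := by
  ext r c
  rw [dblock, mul_apply, Fintype.sum_sigma, Finset.sum_eq_single j]
  · rfl
  · intro k _ hk
    exact Finset.sum_eq_zero fun y _ => by rw [hA _ _ hk, mul_zero]
  · simp

theorem dblock_mul_sub_transpose_mul (hA : IsBlockDiag A) (Z : Matrix (BlkIdx n) (BlkIdx n) ℝ)
    (j : Fin t) :
    dblock (A * Z - Zᵀ * A) j = dblock A j * dblock Z j - (dblock Z j)ᵀ * dblock A j := by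
  rw [← dblock_mul_of_isBlockDiag_left hA, show (dblock Z j)ᵀ = dblock Zᵀ j from rfl,
    ← dblock_mul_of_isBlockDiag_right hA]
  rfl

theorem dblock_bdiag (M : Matrix (BlkIdx n) (BlkIdx n) ℝ) (j : Fin t) :
    dblock (bdiag M) j = dblock M j := by
  ext r c
  simp [dblock, bdiag]

theorem frob_dblock_sq_le (M : Matrix (BlkIdx n) (BlkIdx n) ℝ) (j : Fin t) :
    frob (dblock M j) ^ 2 ≤ frob M ^ 2 := by
  rw [frob_sq, frob_sq]
  calc ∑ r, ∑ c, dblock M j r c ^ 2 ≤ ∑ r, ∑ q, M ⟨j, r⟩ q ^ 2 :=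
        Finset.sum_le_sum fun r _ =>
          sum_le_sum_sigma (f := fun q => M ⟨j, r⟩ q ^ 2) (fun _ => sq_nonneg _) j
    _ ≤ ∑ p, ∑ q, M p q ^ 2 :=
        sum_le_sum_sigma (f := fun p => ∑ q, M p q ^ 2)
          (fun _ => Finset.sum_nonneg fun _ _ => sq_nonneg _) j

end Blocks

theorem eigenvalue_cluster_bound_general {t m : ℕ} {n : Fin t → ℕ}
    (A : Fin m → Matrix (BlkIdx n) (BlkIdx n) ℝ) (hA : ∀ i, IsBlockDiag (A i))
    (Ab : ∀ j : Fin t, Fin m → Matrix (Fin (n j)) (Fin (n j)) ℝ)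
    (hAb : ∀ j i, Ab j i = dblock (A i) j)
    (hdim : ∀ j, Module.finrank ℝ (nSubmodule (Ab j)) = 1)
    (Z : Matrix (BlkIdx n) (BlkIdx n) ℝ)
    (R : Fin m → Matrix (BlkIdx n) (BlkIdx n) ℝ)
    (hR : ∀ i, R i = A i * Z - Zᵀ * A i) :
    ∀ j : Fin t, ∃ μhat : ℝ,
      ENNReal.ofReal
          (((eigMultiset (dblock Z j)).map fun μ => ‖μ - (μhat : ℂ)‖ ^ 2).sum) ≤
        ENNReal.ofReal (∑ i, frob (bdiag (R i)) ^ 2) / (omegaRob Ab) ^ 2 := by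
  intro j
  set μhat := (dblock Z j).trace / Fintype.card (Fin (n j))
  set E := dblock Z j - μhat • 1
  have hE : E.trace = 0 := trace_sub_trace_div_card_smul_one _
  refine ⟨μhat, (ENNReal.ofReal_le_ofReal (sum_norm_sub_sq_eigMultiset_le _ _)).trans ?_⟩
  rw [← vec_dotProduct_vec_self]
  by_cases hj : 1 < n j
  · have hres :
        (Gjj (Ab j) *ᵥ vec E) ⬝ᵥ (Gjj (Ab j) *ᵥ vec E) ≤ ∑ i, frob (bdiag (R i)) ^ 2 := by
      rw [Gjj_mulVec_vec_dotProduct_self]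
      refine Finset.sum_le_sum fun i _ => ?_
      rw [mul_sub_smul_one_sub_transpose_mul, hAb, ← dblock_mul_sub_transpose_mul (hA i), ← hR,
        ← dblock_bdiag]
      exact frob_dblock_sq_le _ _
    have hω : omegaRob Ab ≤ ENNReal.ofReal (minNonzeroSV (Gjj (Ab j))) := iInf₂_le j hj
    calc _ ≤ _ := ofReal_dotProduct_self_le_div fun v hv =>
            vec_dotProduct_eq_zero_of_Gjj_mulVec_eq_zero (hdim j) hE hv
      _ ≤ _ := by gcongr
  · have : Subsingleton (Fin (n j)) := Fin.subsingleton_iff_le_one.mpr (not_lt.mp hj)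
    have hE0 : vec E ⬝ᵥ vec E = 0 := by
      rw [eq_zero_of_trace_eq_zero hE, vec_zero, zero_dotProduct]
    exact (ENNReal.ofReal_eq_zero.mpr hE0.le).trans_le zero_le

/-- Lemma 4.1(b): clustering of the eigenvalues of the diagonal blocks of
`Z` around real numbers, quantified by `ω_rob`. -/
theorem eigenvalue_cluster_bound {t m : ℕ} {n : Fin t → ℕ} (hn : ∀ j, 0 < n j)
    (A : Fin m → Matrix (BlkIdx n) (BlkIdx n) ℝ) (hA : ∀ i, IsBlockDiag (A i))
    (Ab : ∀ j : Fin t, Fin m → Matrix (Fin (n j)) (Fin (n j)) ℝ)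
    (hAb : ∀ j i, Ab j i = dblock (A i) j)
    (hdim : ∀ j, Module.finrank ℝ (nSubmodule (Ab j)) = 1)
    (Z : Matrix (BlkIdx n) (BlkIdx n) ℝ)
    (R : Fin m → Matrix (BlkIdx n) (BlkIdx n) ℝ)
    (hR : ∀ i, R i = A i * Z - Zᵀ * A i) :
    ∀ j : Fin t, ∃ μhat : ℝ,
      ENNReal.ofReal
          (((eigMultiset (dblock Z j)).map fun μ => ‖μ - (μhat : ℂ)‖ ^ 2).sum) ≤
        ENNReal.ofReal (∑ i, frob (bdiag (R i)) ^ 2) / (omegaRob Ab) ^ 2 :=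
  eigenvalue_cluster_bound_general A hA Ab hAb hdim Z R hR

end JBD
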